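/- There exist a constant C > 0 and an integer N such that for every n ≥ N, when the n edges e_1, …, e_n of a round on n agents are chosen independently and uniformly at random among all C(n,2) unordered pairs of distinct elements of {1, …, n}, the expected value of M(e), the maximum length of a monotone interference path in the round (equivalently, one plus the maximum length of a directed path in the dependency DAG of the round), is at most C · (log n)/(log log n). -/

import Mathlib

/-!
A path of length `k + 1` consists of `k + 1` increasing times together with a chain of
`k + 1` edges in which consecutive edges meet. There are `C(n, k+1) ≤ n^(k+1) / (k+1)!` sets
of times, and an edge meets at most `2n` of the `C(n, 2) ≥ n² / 4` edges, so the union bound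
gives `P(M > k) ≤ n^(k+1) / (k+1)! · (8/n)^k`. As `M ≤ n`, this yields
`E[M] ≤ k + n² 8^k / (k+1)!`, and for `k = ⌈8 log n / log log n⌉` the last term is at most `1`
because `k! ≥ (k/e)^k`.
-/

open Finset

/-- An edge of the complete graph `K_n`: an unordered pair of two distinct
elements of `{1, …, n}`, modeled as a 2-element subset of `Fin n`. -/
abbrev Edge (n : ℕ) := {s : Finset (Fin n) // s.card = 2}

/-- A round on `n` agents: a sequence of `n` interactions (edges). -/
abbrev Round (n : ℕ) := Fin n → Edge n

/-- `IsMonoPath e t` says that the strictly increasing sequence of indices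
`t 0 < t 1 < … < t (k-1)` (interaction labels) forms a monotone interference
path of length `k` in the round `e`: consecutive interactions share an agent. -/
def IsMonoPath {n k : ℕ} (e : Round n) (t : Fin k → Fin n) : Prop :=
  StrictMono t ∧
    ∀ i j : Fin k, (i : ℕ) + 1 = (j : ℕ) →
      ((e (t i)).1 ∩ (e (t j)).1).Nonempty

/-- `M e` is the maximum length of a monotone interference path in the round `e`. -/
noncomputable def M {n : ℕ} (e : Round n) : ℕ :=
  sSup {k | ∃ t : Fin k → Fin n, IsMonoPath e t}

open scoped Nat

section Chain

variable {α : Type*} (r : α → α → Prop)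

def FinChain {k : ℕ} (g : Fin k → α) : Prop :=
  ∀ i j : Fin k, (i : ℕ) + 1 = j → r (g i) (g j)

instance [DecidableRel r] {k : ℕ} : DecidablePred (FinChain r (k := k)) := fun g => by
  unfold FinChain; infer_instance

variable {r}

theorem finChain_cons_iff {k : ℕ} {x : α} {g : Fin (k + 1) → α} :
    FinChain r (Fin.cons x g : Fin (k + 2) → α) ↔ r x (g 0) ∧ FinChain r g := by
  refine ⟨fun h => ⟨h 0 1 rfl, fun i j hij => by simpa using h i.succ j.succ (by simp [hij])⟩,
    fun ⟨h0, hg⟩ i j hij => ?_⟩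
  induction j using Fin.cases with
  | zero => simp at hij
  | succ j =>
    induction i using Fin.cases with
    | zero => obtain rfl : j = 0 := Fin.ext (by simpa using hij.symm); simpa using h0
    | succ i => simpa using hg i j (by simpa using hij)

theorem card_finChain_le [Fintype α] [DecidableRel r] {d : ℕ}
    (hd : ∀ y, Fintype.card {x // r x y} ≤ d) (k : ℕ) :
    Fintype.card {g : Fin (k + 1) → α // FinChain r g} ≤ Fintype.card α * d ^ k := by
  induction k with
  | zero =>
    calc _ ≤ Fintype.card (Fin 1 → α) := Fintype.card_subtype_le _
      _ = _ := by simp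
  | succ k ih =>
    have uncons (g : Fin (k + 2) → α) (hg : FinChain r g) :
        r (g 0) (Fin.tail g 0) ∧ FinChain r (Fin.tail g) :=
      finChain_cons_iff.1 (by rwa [Fin.cons_self_tail])
    let split : {g : Fin (k + 2) → α // FinChain r g} ≃
        Σ h : {h : Fin (k + 1) → α // FinChain r h}, {x // r x (h.1 0)} :=
      { toFun := fun g => ⟨⟨Fin.tail g.1, (uncons g.1 g.2).2⟩, ⟨g.1 0, (uncons g.1 g.2).1⟩⟩
        invFun := fun p => ⟨Fin.cons p.2.1 p.1.1, finChain_cons_iff.2 ⟨p.2.2, p.1.2⟩⟩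
        left_inv := fun g => Subtype.ext (Fin.cons_self_tail g.1)
        right_inv := fun _ => rfl }
    calc _ = ∑ h : {h : Fin (k + 1) → α // FinChain r h}, Fintype.card {x // r x (h.1 0)} := by
          rw [Fintype.card_congr split, Fintype.card_sigma]
      _ ≤ ∑ _h : {h : Fin (k + 1) → α // FinChain r h}, d := sum_le_sum fun h _ => hd _
      _ ≤ Fintype.card α * d ^ k * d := by
          rw [sum_const, card_univ, smul_eq_mul]
          exact Nat.mul_le_mul_right _ ih
      _ = _ := by ring

end Chain

theorem card_edge_inter_nonempty_le {V : Type*} [Fintype V] [DecidableEq V] (s : Finset V) :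
    Fintype.card {x : {t : Finset V // #t = 2} // (x.1 ∩ s).Nonempty} ≤ #s * Fintype.card V := by
  have hpair : ∀ x : {t : Finset V // #t = 2}, (x.1 ∩ s).Nonempty →
      x.1 ∈ (s ×ˢ univ).image fun p : V × V => {p.1, p.2} := by
    rintro ⟨x, hx⟩ ⟨c, hc⟩
    obtain ⟨a, b, -, rfl⟩ := card_eq_two.1 hx
    simp only [mem_inter, mem_insert, mem_singleton] at hc
    simp only [mem_image, mem_product, mem_univ, and_true, Prod.exists]
    rcases hc with ⟨rfl | rfl, hcs⟩
    · exact ⟨c, b, hcs, rfl⟩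
    · exact ⟨c, a, hcs, pair_comm _ _⟩
  calc _ = #{x : {t : Finset V // #t = 2} | (x.1 ∩ s).Nonempty} := Fintype.card_subtype _
    _ ≤ #((s ×ˢ univ).image fun p : V × V => {p.1, p.2}) :=
        card_le_card_of_injOn Subtype.val (fun x hx => hpair x (mem_filter.1 hx).2)
          fun _ _ _ _ => Subtype.ext
    _ ≤ #s * Fintype.card V := card_image_le.trans (by rw [card_product, card_univ])

theorem card_subtype_comp_le {ι κ β : Type*} [Fintype ι] [Fintype κ] [Fintype β] [DecidableEq ι]
    [DecidableEq κ] {t : κ → ι} (ht : Function.Injective t) (P : (κ → β) → Prop) [DecidablePred P] :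
    Fintype.card {e : ι → β // P (e ∘ t)} ≤
      Fintype.card {g // P g} * Fintype.card β ^ (Fintype.card ι - Fintype.card κ) := by
  classical
  let restrict (e : {e : ι → β // P (e ∘ t)}) : {g // P g} × ({i // i ∉ Set.range t} → β) :=
    (⟨e.1 ∘ t, e.2⟩, fun i => e.1 i)
  have hrestrict : Function.Injective restrict := by
    intro e e' h
    simp only [restrict, Prod.mk.injEq, Subtype.mk.injEq, funext_iff, Function.comp_apply,
      Subtype.forall] at h
    refine Subtype.ext (funext fun i => ?_)
    by_cases hi : i ∈ Set.range t
    · obtain ⟨j, rfl⟩ := hi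
      exact h.1 j
    · exact h.2 i hi
  calc _ ≤ _ := Fintype.card_le_of_injective restrict hrestrict
    _ = _ := by
      rw [Fintype.card_prod, Fintype.card_fun, Fintype.card_subtype_compl,
        Set.card_range_of_injective ht]

theorem card_filter_strictMono_le {α : Type*} [LinearOrder α] [Fintype α] (k : ℕ) :
    #{t : Fin k → α | StrictMono t} ≤ (Fintype.card α).choose k := by
  calc _ ≤ #(univ.powersetCard k : Finset (Finset α)) := by
        refine card_le_card_of_injOn (fun t => univ.image t) (fun t ht => ?_)
          fun t ht u hu htu => ?_
        · rw [mem_coe, mem_filter] at ht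
          rw [mem_coe, mem_powersetCard, card_image_of_injective _ ht.2.injective]
          simp
        · rw [mem_coe, mem_filter] at ht hu
          refine (ht.2.range_inj hu.2).1 ?_
          simpa using congrArg ((↑) : Finset α → Set α) htu
    _ = _ := by rw [card_powersetCard, card_univ]

abbrev Interferes {n : ℕ} (x y : Edge n) : Prop := (x.1 ∩ y.1).Nonempty

theorem card_interferes_le {n : ℕ} (y : Edge n) :
    Fintype.card {x // Interferes x y} ≤ 2 * n := by
  simpa [y.2] using card_edge_inter_nonempty_le y.1

section MonoPath

variable {n k : ℕ}

theorem IsMonoPath.length_le {e : Round n} {t : Fin k → Fin n} (h : IsMonoPath e t) : k ≤ n := by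
  simpa using Fintype.card_le_of_injective t h.1.injective

theorem M_le (e : Round n) : M e ≤ n :=
  csSup_le' fun _ ⟨_, ht⟩ => ht.length_le

theorem exists_isMonoPath_of_le_M {e : Round n} (h : k ≤ M e) :
    ∃ t : Fin k → Fin n, IsMonoPath e t := by
  obtain ⟨t, ht⟩ : M e ∈ {m | ∃ t : Fin m → Fin n, IsMonoPath e t} :=
    Nat.sSup_mem ⟨0, Fin.elim0, fun i => i.elim0, fun i => i.elim0⟩
      ⟨n, fun _ ⟨_, ht⟩ => ht.length_le⟩
  exact ⟨t ∘ Fin.castLE h, ht.1.comp (Fin.strictMono_castLE h),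
    fun i j hij => ht.2 _ _ (by simpa using hij)⟩

end MonoPath

theorem card_le_M_mul_pow_le (n k : ℕ) :
    #{e : Round n | k ≤ M e} * Fintype.card (Edge n) ^ k ≤
      n.choose k * Fintype.card {g : Fin k → Edge n // FinChain Interferes g} *
        Fintype.card (Round n) := by
  have hsub : ({e : Round n | k ≤ M e} : Finset _) ⊆
      ({t : Fin k → Fin n | StrictMono t} : Finset _).biUnion
        fun t => {e | FinChain Interferes (e ∘ t)} := by
    intro e he
    obtain ⟨t, hmono, hchain⟩ := exists_isMonoPath_of_le_M (mem_filter.1 he).2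
    exact mem_biUnion.2 ⟨t, mem_filter.2 ⟨mem_univ _, hmono⟩, mem_filter.2 ⟨mem_univ _, hchain⟩⟩
  have hfixed : ∀ t ∈ ({t : Fin k → Fin n | StrictMono t} : Finset _),
      #{e : Round n | FinChain Interferes (e ∘ t)} ≤
        Fintype.card {g : Fin k → Edge n // FinChain Interferes g} *
          Fintype.card (Edge n) ^ (n - k) := by
    intro t ht
    rw [← Fintype.card_subtype]
    simpa using card_subtype_comp_le (mem_filter.1 ht).2.injective (FinChain Interferes)
  have hunion : #{e : Round n | k ≤ M e} ≤ n.choose k *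
      (Fintype.card {g : Fin k → Edge n // FinChain Interferes g} *
        Fintype.card (Edge n) ^ (n - k)) := by
    calc _ ≤ _ := card_le_card hsub
      _ ≤ _ := card_biUnion_le
      _ ≤ _ := sum_le_sum hfixed
      _ ≤ _ := by
        rw [sum_const, smul_eq_mul]
        exact Nat.mul_le_mul_right _ (by simpa using card_filter_strictMono_le (α := Fin n) k)
  rcases le_or_gt k n with hk | hk
  · calc _ ≤ _ := Nat.mul_le_mul_right _ hunion
      _ = _ := by rw [Fintype.card_fun, Fintype.card_fin, ← pow_sub_mul_pow _ hk]; ring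
  · simp_all [Nat.choose_eq_zero_of_lt hk]

theorem sq_div_four_le_card_edge {n : ℕ} (hn : 2 ≤ n) :
    (n : ℝ) ^ 2 / 4 ≤ Fintype.card (Edge n) := by
  rw [Fintype.card_finset_len, Fintype.card_fin, Nat.cast_choose_two]
  have : (2 : ℝ) ≤ n := by exact_mod_cast hn
  nlinarith

theorem card_round_pos {n : ℕ} (hn : 2 ≤ n) : 0 < Fintype.card (Round n) := by
  rw [Fintype.card_fun, Fintype.card_finset_len]
  exact pow_pos (Nat.choose_pos (by simpa using hn)) _

theorem card_lt_M_div_card_le {n : ℕ} (hn : 2 ≤ n) (k : ℕ) :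
    (#{e : Round n | k + 1 ≤ M e} : ℝ) / Fintype.card (Round n) ≤ n * 8 ^ k / (k + 1)! := by
  have hchains : (Fintype.card {g : Fin (k + 1) → Edge n // FinChain Interferes g} : ℝ) ≤
      Fintype.card (Edge n) * (2 * n) ^ k := by
    exact_mod_cast card_finChain_le card_interferes_le k
  have hunion : (#{e : Round n | k + 1 ≤ M e} : ℝ) * Fintype.card (Edge n) ^ (k + 1) ≤
      n.choose (k + 1) * Fintype.card {g : Fin (k + 1) → Edge n // FinChain Interferes g} *
        Fintype.card (Round n) := by
    exact_mod_cast card_le_M_mul_pow_le n (k + 1)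
  set E := (Fintype.card (Edge n) : ℝ)
  have hE : (n : ℝ) ^ 2 / 4 ≤ E := sq_div_four_le_card_edge hn
  have hE0 : 0 < E := lt_of_lt_of_le (by positivity) hE
  have hgrowth : (n : ℝ) ^ (k + 1) * (E * (2 * n) ^ k) ≤ n * 8 ^ k * E ^ (k + 1) := by
    have : (2 * n ^ 2 : ℝ) ^ k ≤ (8 * E) ^ k := pow_le_pow_left₀ (by positivity) (by linarith) k
    calc _ = n * E * (2 * n ^ 2 : ℝ) ^ k := by ring
      _ ≤ n * E * (8 * E) ^ k := by gcongr
      _ = _ := by ring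
  rw [div_le_iff₀ (by exact_mod_cast card_round_pos hn)]
  refine le_of_mul_le_mul_right ?_ (pow_pos hE0 (k + 1))
  calc _ ≤ _ := hunion
    _ ≤ (n : ℝ) ^ (k + 1) / (k + 1)! * (E * (2 * n) ^ k) * Fintype.card (Round n) := by
        gcongr
        exact Nat.choose_le_pow_div (k + 1) n
    _ = (n : ℝ) ^ (k + 1) * (E * (2 * n) ^ k) * (Fintype.card (Round n) / (k + 1)!) := by ring
    _ ≤ n * 8 ^ k * E ^ (k + 1) * (Fintype.card (Round n) / (k + 1)!) := by gcongr
    _ = _ := by ring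

theorem sum_le_card_mul_add_mul_card_filter {Ω : Type*} [Fintype Ω] {f : Ω → ℕ} {n : ℕ}
    (hf : ∀ ω, f ω ≤ n) (k : ℕ) :
    ∑ ω, f ω ≤ Fintype.card Ω * k + n * #{ω | k + 1 ≤ f ω} := by
  calc ∑ ω, f ω ≤ ∑ ω, (k + n * if k + 1 ≤ f ω then 1 else 0) :=
        sum_le_sum fun ω _ => by have := hf ω; split_ifs <;> omega
    _ = _ := by rw [sum_add_distrib, sum_const, ← mul_sum, sum_boole, card_univ, smul_eq_mul]; rfl

theorem expectation_M_le {n : ℕ} (hn : 2 ≤ n) (k : ℕ) :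
    (∑ e : Round n, (M e : ℝ)) / Fintype.card (Round n) ≤ k + n ^ 2 * 8 ^ k / (k + 1)! := by
  have hΩ : (0 : ℝ) < Fintype.card (Round n) := by exact_mod_cast card_round_pos hn
  have hsum : ∑ e : Round n, (M e : ℝ) ≤
      Fintype.card (Round n) * k + n * #{e : Round n | k + 1 ≤ M e} := by
    exact_mod_cast sum_le_card_mul_add_mul_card_filter M_le k
  calc _ ≤ (Fintype.card (Round n) * k + n * #{e : Round n | k + 1 ≤ M e}) /
        (Fintype.card (Round n) : ℝ) := by gcongr
    _ = k + n * (#{e : Round n | k + 1 ≤ M e} / Fintype.card (Round n)) := by field_simp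
    _ ≤ k + n * (n * 8 ^ k / (k + 1)!) := by gcongr k + n * ?_; exact card_lt_M_div_card_le hn k
    _ = _ := by ring

open Real in
theorem exp_two_mul_mul_pow_le_factorial {L : ℝ} (hL : 0 < L) (hl : 16 ≤ log L) {k : ℕ}
    (hk : 8 * L / log L ≤ k) : exp (2 * L) * 8 ^ k ≤ k ! := by
  set l := log L
  have hl0 : 0 < l := by linarith
  have hk0 : (0 : ℝ) < k := lt_of_lt_of_le (by positivity) hk
  have hkl : 8 * L ≤ k * l := (div_le_iff₀ hl0).1 hk
  have hlogl : log l ≤ l / 2 := by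
    rw [log_le_iff_le_exp hl0]
    nlinarith [quadratic_le_exp_of_nonneg (x := l / 2) (by positivity)]
  have hlogk : l / 2 ≤ log k :=
    calc l / 2 ≤ l - log l := by linarith
      _ = log (L / l) := by rw [log_div hL.ne' hl0.ne']
      _ ≤ log k :=
          log_le_log (by positivity) ((div_le_div_of_nonneg_right (by linarith) hl0.le).trans hk)
  have hexponent : 2 * L + 4 * k ≤ k * log k := by nlinarith
  have h8 : (8 : ℝ) ≤ exp 3 := by nlinarith [quadratic_le_exp_of_nonneg (x := 3) (by norm_num)]
  have hstirling : (k : ℝ) ^ k ≤ k ! * exp k := by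
    have := pow_div_factorial_le_exp (k : ℝ) hk0.le k
    rwa [div_le_iff₀ (by positivity), mul_comm] at this
  refine le_of_mul_le_mul_right ?_ (exp_pos (k : ℝ))
  calc exp (2 * L) * 8 ^ k * exp k ≤ exp (2 * L) * exp 3 ^ k * exp k := by gcongr
    _ = exp (2 * L + 4 * k) := by
        rw [← exp_nat_mul, mul_assoc, ← exp_add, ← exp_add]; ring_nf
    _ ≤ exp (k * log k) := exp_le_exp.2 hexponent
    _ = k ^ k := by rw [exp_nat_mul, exp_log hk0]
    _ ≤ _ := hstirling

open Real in
/-- There exist a constant `C > 0` and an integer `N` such that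
for every `n ≥ N`, when the `n` edges of a round on `n` agents are chosen
independently and uniformly at random (i.e. uniformly over all rounds), the
expected value of `M e`, the maximum length of a monotone interference path
(one plus the maximum length of a directed path in the dependency DAG), is at
most `C * log n / log (log n)`. -/
theorem stmt11 :
    ∃ C : ℝ, 0 < C ∧ ∃ N : ℕ, ∀ n : ℕ, N ≤ n →
      (∑ e : Round n, (M e : ℝ)) / (Fintype.card (Round n)) ≤
        C * Real.log n / Real.log (Real.log n) := by
  refine ⟨10, by norm_num, ⌈exp (exp 16)⌉₊, fun n hn => ?_⟩
  have hn' : exp (exp 16) ≤ n := Nat.ceil_le.1 hn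
  have hn0 : (0 : ℝ) < n := (exp_pos _).trans_le hn'
  set L := log n
  have hL : exp 16 ≤ L := (le_log_iff_exp_le hn0).2 hn'
  have hL0 : 0 < L := (exp_pos _).trans_le hL
  set l := log L
  have hl : 16 ≤ l := (le_log_iff_exp_le hL0).2 hL
  have hlL : l ≤ L := (log_le_sub_one_of_pos hL0).trans (by linarith)
  have hn2 : 2 ≤ n := by
    have := add_one_le_exp (exp 16); have := add_one_le_exp 16
    exact_mod_cast (show (2 : ℝ) ≤ n by linarith)
  set k := ⌈8 * L / l⌉₊
  have hfact : (n : ℝ) ^ 2 * 8 ^ k ≤ (k + 1)! :=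
    calc (n : ℝ) ^ 2 * 8 ^ k = exp (2 * L) * 8 ^ k := by
          rw [show (2 : ℝ) * L = ((2 : ℕ) : ℝ) * L by norm_num, exp_nat_mul, exp_log hn0]
      _ ≤ k ! := exp_two_mul_mul_pow_le_factorial hL0 hl (Nat.le_ceil _)
      _ ≤ (k + 1)! := by exact_mod_cast Nat.factorial_le k.le_succ
  calc _ ≤ (k : ℝ) + n ^ 2 * 8 ^ k / (k + 1)! := expectation_M_le hn2 k
    _ ≤ (k : ℝ) + 1 := by gcongr; exact div_le_one_of_le₀ hfact (by positivity)
    _ ≤ 8 * L / l + 2 := by linarith [Nat.ceil_lt_add_one (show 0 ≤ 8 * L / l by positivity)]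
    _ ≤ 10 * L / l := by
        rw [show 10 * L / l = 8 * L / l + 2 * (L / l) by ring]
        linarith [(one_le_div₀ (by linarith)).2 hlL]
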